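/- In the second traditional strategy (splitting by a point into 2^N sub-boxes with f evaluated at the splitting point), every partition of a box that already has f evaluated at exactly one of its vertices produces exactly one sub-box having f evaluated at two of its vertices, and every partition of a box having f evaluated at two (opposite) vertices produces exactly two sub-boxes each having f evaluated at two of its vertices. -/

import Mathlib

/-!
Encode the sub-box with index `s` as `[corner p c s, corner c q s]`. The split point `c` is a vertex
of every sub-box but, as `p j < c j < q j` for some coordinate `j`, not a vertex of `[p, q]`; and
the only vertex of `[p, q]` that is also a vertex of sub-box `s` is `corner p q s`. So with `E` a
set of vertices of `[p, q]`, sub-box `s` sees the two evaluated vertices `c` and `corner p q s` if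
the latter lies in `E`, and only `c` otherwise. As `corner p q` is injective, the sub-boxes with two
evaluated vertices correspond bijectively to the points of `E`.
-/

namespace Box

variable {ι α : Type*}

def corner (a b : ι → α) (s : ι → Bool) : ι → α := fun j => if s j then b j else a j

def vertices (a b : ι → α) : Set (ι → α) := {w | ∀ j, w j = a j ∨ w j = b j}

theorem corner_mem_vertices (a b : ι → α) (s : ι → Bool) : corner a b s ∈ vertices a b := by
  intro j
  unfold corner
  split_ifs <;> simp

theorem vertices_subset_range_corner (a b : ι → α) : vertices a b ⊆ Set.range (corner a b) := by
  classical
  intro w hw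
  refine ⟨fun j => decide (w j = b j), funext fun j => ?_⟩
  rcases hw j with h | h <;> by_cases hb : w j = b j <;> simp_all [corner]

theorem corner_injective {a b : ι → α} (hab : ∀ j, a j ≠ b j) : (corner a b).Injective := by
  intro s t hst
  funext j
  have := congrFun hst j
  unfold corner at this
  cases hs : s j <;> cases ht : t j <;> simp_all [Ne.symm (hab j)]

theorem mem_vertices_corner_corner {p c q : ι → α} (s : ι → Bool) :
    c ∈ vertices (corner p c s) (corner c q s) := by
  intro j
  unfold corner
  cases s j <;> simp

variable [Preorder α] {p c q : ι → α}

theorem notMem_vertices_of_lt [Nonempty ι] (hpc : ∀ j, p j < c j) (hcq : ∀ j, c j < q j) :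
    c ∉ vertices p q := fun hc => by
  obtain ⟨j⟩ := ‹Nonempty ι›
  rcases hc j with h | h
  · exact (hpc j).ne' h
  · exact (hcq j).ne h

theorem vertices_corner_corner_inter_vertices (hpc : ∀ j, p j < c j) (hcq : ∀ j, c j < q j)
    (s : ι → Bool) :
    vertices (corner p c s) (corner c q s) ∩ vertices p q = {corner p q s} := by
  ext w
  simp only [vertices, corner, Set.mem_inter_iff, Set.mem_ofPred_eq, Set.mem_singleton_iff,
    funext_iff, ← forall_and]
  refine forall_congr' fun j => ?_
  have := (hpc j).ne
  have := (hcq j).ne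
  have := ((hpc j).trans (hcq j)).ne
  cases s j <;> grind

variable {E : Set (ι → α)}

theorem vertices_corner_corner_inter_union (hpc : ∀ j, p j < c j) (hcq : ∀ j, c j < q j)
    (hE : E ⊆ vertices p q) (s : ι → Bool) :
    vertices (corner p c s) (corner c q s) ∩ (E ∪ {c}) = insert c ({corner p q s} ∩ E) := by
  rw [Set.inter_union_distrib_left, Set.inter_singleton_of_mem (mem_vertices_corner_corner s),
    Set.union_singleton, ← vertices_corner_corner_inter_vertices hpc hcq s, Set.inter_assoc,
    Set.inter_eq_self_of_subset_right hE]

theorem ncard_vertices_corner_corner_inter_union_eq_two_iff [Nonempty ι]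
    (hpc : ∀ j, p j < c j) (hcq : ∀ j, c j < q j) (hE : E ⊆ vertices p q) (s : ι → Bool) :
    (vertices (corner p c s) (corner c q s) ∩ (E ∪ {c})).ncard = 2 ↔ corner p q s ∈ E := by
  have hc : c ≠ corner p q s := fun h =>
    notMem_vertices_of_lt hpc hcq (h ▸ corner_mem_vertices p q s)
  rw [vertices_corner_corner_inter_union hpc hcq hE]
  by_cases h : corner p q s ∈ E
  · simp [Set.singleton_inter_of_mem h, Set.ncard_pair hc, h]
  · simp [Set.singleton_inter_eq_empty.mpr h, h]

theorem ncard_setOf_ncard_vertices_corner_corner_inter_union_eq_two [Nonempty ι]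
    (hpc : ∀ j, p j < c j) (hcq : ∀ j, c j < q j) (hE : E ⊆ vertices p q) :
    {s | (vertices (corner p c s) (corner c q s) ∩ (E ∪ {c})).ncard = 2}.ncard = E.ncard := by
  have hpq : ∀ j, p j ≠ q j := fun j => ((hpc j).trans (hcq j)).ne
  have hset : {s | (vertices (corner p c s) (corner c q s) ∩ (E ∪ {c})).ncard = 2} =
      corner p q ⁻¹' E :=
    Set.ext (ncard_vertices_corner_corner_inter_union_eq_two_iff hpc hcq hE)
  rw [hset, Set.ncard_preimage_of_injective_subset_range (corner_injective hpq)
    (hE.trans (vertices_subset_range_corner p q))]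

end Box

/-- In the second traditional strategy, a box `[p,q]` with evaluation set
`E ⊆ vertices of [p,q]` is split by an interior point `c` into `2^N` sub-boxes
and `E` is augmented by `c`.  If exactly one vertex of `[p,q]` is in `E`, then
exactly one sub-box has `f` evaluated at two of its vertices; if `E` consists of
two opposite vertices of `[p,q]`, then exactly two sub-boxes have `f` evaluated
at two of their vertices. -/
theorem second_strategy_redundancy (N : ℕ) (hN : 1 ≤ N)
    (p q c : Fin N → ℝ) (hpc : ∀ j, p j < c j) (hcq : ∀ j, c j < q j)
    (E : Set (Fin N → ℝ))
    (hE : E ⊆ {w | ∀ j, w j = p j ∨ w j = q j})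
    (lo hi : (Fin N → Bool) → Fin N → ℝ)
    (hlo : ∀ s j, lo s j = if s j then c j else p j)
    (hhi : ∀ s j, hi s j = if s j then q j else c j) :
    (({w | ∀ j, w j = p j ∨ w j = q j} ∩ E).ncard = 1 →
      {s : Fin N → Bool |
        ({w | ∀ j, w j = lo s j ∨ w j = hi s j} ∩ (E ∪ {c})).ncard = 2}.ncard = 1) ∧
    (∀ w w' : Fin N → ℝ,
      (∀ j, (w j = p j ∧ w' j = q j) ∨ (w j = q j ∧ w' j = p j)) →
      {w | ∀ j, w j = p j ∨ w j = q j} ∩ E = {w, w'} →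
      {s : Fin N → Bool |
        ({x | ∀ j, x j = lo s j ∨ x j = hi s j} ∩ (E ∪ {c})).ncard = 2}.ncard = 2) := by
  obtain rfl : lo = Box.corner p c := funext fun s => funext (hlo s)
  obtain rfl : hi = Box.corner c q := funext fun s => funext (hhi s)
  have : Nonempty (Fin N) := ⟨⟨0, hN⟩⟩
  have hcount := Box.ncard_setOf_ncard_vertices_corner_corner_inter_union_eq_two hpc hcq hE
  rw [Set.inter_eq_self_of_subset_right hE]
  refine ⟨hcount.trans, fun w w' hww' hEw => ?_⟩
  have hne : w ≠ w' := by
    rintro rfl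
    rcases hww' ⟨0, hN⟩ with ⟨h, h'⟩ | ⟨h, h'⟩ <;>
      exact ((hpc _).trans (hcq _)).ne (by rw [← h, ← h'])
  exact hcount.trans (hEw ▸ Set.ncard_pair hne)
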